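/- arXiv:1411.1348 — 5 statements merged into one kernel-verified Lean document; each statement's English description precedes it below -/
import Mathlib

section
/- Sklar's theorem (existence and uniqueness): Let (X,Y) be a bivariate random variable on ℝ² with joint cumulative distribution function F_{X,Y}(x,y) = P(X ≤ x, Y ≤ y) and marginal cumulative distribution functions F_X and F_Y. Then there exists a bivariate copula C : [0,1]² → [0,1] such that F_{X,Y}(x,y) = C(F_X(x), F_Y(y)) for all x, y ∈ ℝ. Moreover, if F_X and F_Y are continuous, then C is unique on [0,1]². -/
/-!
Existence: take `V` uniform on `[0,1]` and independent of `(X, Y)`, and form the distributional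
transforms `U₁ = F_X(X⁻) + V (F_X(X) - F_X(X⁻))` and `U₂ = F_Y(Y⁻) + V (F_Y(Y) - F_Y(Y⁻))`.
Each is uniform on `[0,1]`, and almost surely `U₁ ≤ F_X(x) ↔ X ≤ x` and `U₂ ≤ F_Y(y) ↔ Y ≤ y`,
so the joint distribution function `C` of `(U₁, U₂)` is a copula with `F = C(F_X, F_Y)`.
Uniqueness: a continuous marginal cdf takes every value in `(0,1)`, so `F` determines `C` on
`(0,1)²`, and on the boundary of `[0,1]²` every copula has the same values.
-/

open MeasureTheory Set

/-- A bivariate copula: a function `C : [0,1]² → [0,1]` (here defined on all of `ℝ²`,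
with the copula properties required on `[0,1]²`) with uniform margins and which is
2-increasing. -/
def IsCopula (C : ℝ → ℝ → ℝ) : Prop :=
  (∀ u ∈ Icc (0:ℝ) 1, ∀ v ∈ Icc (0:ℝ) 1, C u v ∈ Icc (0:ℝ) 1) ∧
  (∀ u ∈ Icc (0:ℝ) 1, C u 0 = 0) ∧
  (∀ v ∈ Icc (0:ℝ) 1, C 0 v = 0) ∧
  (∀ u ∈ Icc (0:ℝ) 1, C u 1 = u) ∧
  (∀ v ∈ Icc (0:ℝ) 1, C 1 v = v) ∧
  (∀ u₁ ∈ Icc (0:ℝ) 1, ∀ u₂ ∈ Icc (0:ℝ) 1, ∀ v₁ ∈ Icc (0:ℝ) 1, ∀ v₂ ∈ Icc (0:ℝ) 1,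
    u₁ ≤ u₂ → v₁ ≤ v₂ → 0 ≤ C u₂ v₂ - C u₁ v₂ - C u₂ v₁ + C u₁ v₁)

open Filter Function ProbabilityTheory
open scoped unitInterval

theorem MeasureTheory.measure_eq_zero_of_forall_measure_inter_Iic_eq_zero {α : Type*}
    [ConditionallyCompleteLinearOrder α] [TopologicalSpace α] [OrderTopology α]
    [MeasurableSpace α] {μ : Measure α} [μ.InnerRegular] {S : Set α} (hS : MeasurableSet S)
    (h : ∀ s ∈ S, μ (S ∩ Iic s) = 0) : μ S = 0 := by
  by_contra hS0
  obtain ⟨K, hKS, hK, hKpos⟩ := hS.exists_lt_isCompact (pos_iff_ne_zero.2 hS0)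
  have hmax : sSup K ∈ K := hK.sSup_mem (nonempty_of_measure_ne_zero hKpos.ne')
  refine hKpos.ne' (measure_mono_null (fun k hk => ?_) (h _ (hKS hmax)))
  exact ⟨hKS hk, le_csSup hK.bddAbove hk⟩

theorem MeasureTheory.measureReal_inter_add_inter_le {Ω : Type*} [MeasurableSpace Ω]
    (P : Measure Ω) [IsFiniteMeasure P] {A₁ A₂ B₁ B₂ : Set Ω} (hA : A₁ ⊆ A₂) (hB : B₁ ⊆ B₂)
    (hAB : MeasurableSet (A₂ ∩ B₁)) :
    P.real (A₁ ∩ B₂) + P.real (A₂ ∩ B₁) ≤ P.real (A₂ ∩ B₂) + P.real (A₁ ∩ B₁) := by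
  have h := measureReal_union_add_inter (μ := P) (s := A₁ ∩ B₂) hAB
  have hinter : A₁ ∩ B₂ ∩ (A₂ ∩ B₁) = A₁ ∩ B₁ := by
    ext ω
    exact ⟨fun h => ⟨h.1.1, h.2.2⟩, fun h => ⟨⟨h.1, hB h.2⟩, hA h.1, h.2⟩⟩
  have hunion : A₁ ∩ B₂ ∪ A₂ ∩ B₁ ⊆ A₂ ∩ B₂ :=
    union_subset (inter_subset_inter_left _ hA) (inter_subset_inter_right _ hB)
  rw [hinter] at h
  linarith [measureReal_mono (μ := P) hunion]

theorem StieltjesFunction.exists_leftLim_le_le (f : StieltjesFunction ℝ) {u a b : ℝ}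
    (ha : f a < u) (hb : u ≤ f b) : ∃ q, leftLim f q ≤ u ∧ u ≤ f q := by
  set S := {t | u ≤ f t}
  have hbdd : BddBelow S :=
    ⟨a, fun t ht => le_of_not_gt fun hta => ((f.mono hta.le).trans_lt ha).not_ge ht⟩
  refine ⟨sInf S, le_of_tendsto (f.mono.tendsto_leftLim _) ?_,
    ge_of_tendsto ((f.right_continuous _).mono Ioi_subset_Ici_self) ?_⟩
  · filter_upwards [self_mem_nhdsWithin] with t ht
    exact le_of_lt (not_le.1 fun h => (csInf_le hbdd h).not_gt ht)
  · filter_upwards [self_mem_nhdsWithin] with t ht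
    obtain ⟨s, hs, hst⟩ := exists_lt_of_csInf_lt ⟨b, hb⟩ ht
    exact hs.trans (f.mono hst.le)

theorem unitInterval.mul_measureReal_setOf_add_mul_le {a d u : ℝ} (hd : 0 ≤ d) (hau : a ≤ u)
    (hud : u ≤ a + d) : d * volume.real {t : I | a + t * d ≤ u} = u - a := by
  rcases hd.eq_or_lt with rfl | hd
  · rw [zero_mul]; linarith
  have hr : (u - a) / d ∈ Icc (0:ℝ) 1 :=
    ⟨div_nonneg (by linarith) hd.le, (div_le_one hd).2 (by linarith)⟩
  have hset : {t : I | a + t * d ≤ u} = Iic ⟨(u - a) / d, hr⟩ := by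
    ext t
    change a + t * d ≤ u ↔ (t : ℝ) ≤ (u - a) / d
    rw [le_div_iff₀ hd]
    constructor <;> intro h <;> linarith
  rw [hset, measureReal_def, volume_Iic, ENNReal.toReal_ofReal hr.1]
  field_simp

namespace ProbabilityTheory

variable (ν : Measure ℝ)

/-- Rüschendorf's distributional transform `F(x⁻) + t (F(x) - F(x⁻))` of `ν` with cdf `F`: it
spreads each atom of `ν` uniformly over the corresponding jump of `F`. -/
noncomputable def distribTransform (p : ℝ × I) : ℝ :=
  leftLim (cdf ν) p.1 + p.2 * (cdf ν p.1 - leftLim (cdf ν) p.1)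

theorem leftLim_cdf_le_distribTransform (p : ℝ × I) :
    leftLim (cdf ν) p.1 ≤ distribTransform ν p :=
  le_add_of_nonneg_right (mul_nonneg p.2.2.1 (sub_nonneg.2 ((monotone_cdf ν).leftLim_le le_rfl)))

theorem distribTransform_le_cdf (p : ℝ × I) : distribTransform ν p ≤ cdf ν p.1 := by
  have hjump := (monotone_cdf ν).leftLim_le (le_refl p.1)
  have ht := p.2.2.2
  unfold distribTransform
  nlinarith

theorem measurable_distribTransform : Measurable (distribTransform ν) := by
  have hF := (monotone_cdf ν).measurable
  have hL := (monotone_cdf ν).leftLim.measurable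
  unfold distribTransform
  fun_prop

variable [IsProbabilityMeasure ν]

theorem measureReal_Iio_eq_leftLim_cdf (x : ℝ) : ν.real (Iio x) = leftLim (cdf ν) x := by
  have h := (cdf ν).measure_Iio (tendsto_cdf_atBot ν) x
  rw [measure_cdf, sub_zero] at h
  have hnonneg : 0 ≤ leftLim (cdf ν) x :=
    (cdf_nonneg ν (x - 1)).trans ((monotone_cdf ν).le_leftLim (sub_one_lt x))
  rw [measureReal_def, h, ENNReal.toReal_ofReal hnonneg]

theorem measureReal_singleton_eq_cdf_sub_leftLim (x : ℝ) :
    ν.real {x} = cdf ν x - leftLim (cdf ν) x := by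
  have h := (cdf ν).measure_singleton x
  rw [measure_cdf] at h
  rw [measureReal_def, h,
    ENNReal.toReal_ofReal (sub_nonneg.2 ((monotone_cdf ν).leftLim_le le_rfl))]

theorem measure_setOf_lt_and_cdf_eq (x : ℝ) : ν {s | x < s ∧ cdf ν s = cdf ν x} = 0 := by
  refine measure_eq_zero_of_forall_measure_inter_Iic_eq_zero
    (measurableSet_Ioi.inter ((monotone_cdf ν).measurable (measurableSet_singleton _)))
    fun s hs => measure_mono_null (t := Ioc x s) (fun r hr => ⟨hr.1.1, hr.2⟩) ?_
  have h := (cdf ν).measure_Ioc x s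
  rw [measure_cdf, hs.2, sub_self, ENNReal.ofReal_zero] at h
  exact h

theorem ae_le_of_distribTransform_le_cdf (x : ℝ) :
    ∀ᵐ p ∂(ν.prod volume), distribTransform ν p ≤ cdf ν x → p.1 ≤ x := by
  filter_upwards [Measure.quasiMeasurePreserving_fst.ae
      (measure_eq_zero_iff_ae_notMem.1 (measure_setOf_lt_and_cdf_eq ν x)),
    Measure.quasiMeasurePreserving_snd.ae (Measure.ae_ne volume 0)] with ⟨s, t⟩ hs ht hT
  -- for `x < s`, `F x ≤ F(s⁻) ≤ T ≤ F x` and `t ≠ 0` force `F s = F x`, a null event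
  by_contra! hxs
  have hjump : cdf ν x ≤ leftLim (cdf ν) s := (monotone_cdf ν).le_leftLim hxs
  have hLT := leftLim_cdf_le_distribTransform ν (s, t)
  have ht0 : (0:ℝ) < t := lt_of_le_of_ne t.2.1 fun h => ht (Subtype.ext h.symm)
  have hFs : cdf ν s = cdf ν x := by
    unfold distribTransform at hT hLT
    nlinarith [(monotone_cdf ν).leftLim_le (le_refl s)]
  exact hs ⟨hxs, hFs⟩

theorem ae_distribTransform_le_cdf_iff (x : ℝ) :
    ∀ᵐ p ∂(ν.prod volume), distribTransform ν p ≤ cdf ν x ↔ p.1 ≤ x := by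
  filter_upwards [ae_le_of_distribTransform_le_cdf ν x] with p hp
  exact ⟨hp, fun h => (distribTransform_le_cdf ν p).trans (monotone_cdf ν h)⟩

theorem measureReal_distribTransform_le_of_mem_Ioo {u : ℝ} (hu : u ∈ Ioo 0 1) :
    (ν.prod volume).real {p | distribTransform ν p ≤ u} = u := by
  obtain ⟨a, ha⟩ := ((tendsto_cdf_atBot ν).eventually (gt_mem_nhds hu.1)).exists
  obtain ⟨b, hb⟩ := ((tendsto_cdf_atTop ν).eventually (lt_mem_nhds hu.2)).exists
  obtain ⟨q, hLq, hqF⟩ := (cdf ν).exists_leftLim_le_le ha hb.le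
  set L := leftLim (cdf ν) q
  set S := {t : I | L + t * (cdf ν q - L) ≤ u}
  have hS : MeasurableSet S := measurableSet_le (by fun_prop) measurable_const
  -- `q` is a `u`-quantile; the second piece is the part of the jump at `q` lying below `u`
  have hae : {p | distribTransform ν p ≤ u} =ᵐ[ν.prod volume]
      (Iio q ×ˢ univ ∪ {q} ×ˢ S : Set (ℝ × I)) := by
    refine eventuallyEq_set.2 ?_
    filter_upwards [ae_le_of_distribTransform_le_cdf ν q] with ⟨s, t⟩ hp
    rcases lt_trichotomy s q with hsq | rfl | hqs
    · have hT := (distribTransform_le_cdf ν (s, t)).trans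
        (((monotone_cdf ν).le_leftLim hsq).trans hLq)
      simp [hsq, hT]
    · simp [distribTransform, S, L]
    · have hT : ¬ distribTransform ν (s, t) ≤ u := fun h => hqs.not_ge (hp (h.trans hqF))
      simp [hqs.not_gt, hqs.ne', hT]
  have hjump : L ≤ cdf ν q := (monotone_cdf ν).leftLim_le le_rfl
  rw [measureReal_congr hae, measureReal_union (disjoint_prod.2 (Or.inl (by simp)))
    ((measurableSet_singleton q).prod hS), measureReal_prod_prod, measureReal_prod_prod,
    probReal_univ, mul_one, measureReal_Iio_eq_leftLim_cdf,
    measureReal_singleton_eq_cdf_sub_leftLim,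
    unitInterval.mul_measureReal_setOf_add_mul_le (sub_nonneg.2 hjump) hLq (by linarith)]
  ring

theorem measureReal_distribTransform_le {u : ℝ} (hu : u ∈ Icc 0 1) :
    (ν.prod volume).real {p | distribTransform ν p ≤ u} = u := by
  rcases hu.1.eq_or_lt with rfl | hu0
  · refine le_antisymm (le_of_forall_gt_imp_ge_of_dense fun ε hε => ?_) measureReal_nonneg
    have hε' : min ε (1 / 2) ∈ Ioo (0:ℝ) 1 := ⟨lt_min hε one_half_pos, by
      linarith [min_le_right ε (1 / 2)]⟩
    calc _ ≤ (ν.prod volume).real {p | distribTransform ν p ≤ min ε (1 / 2)} :=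
          measureReal_mono fun p hp => le_trans hp hε'.1.le
      _ = min ε (1 / 2) := measureReal_distribTransform_le_of_mem_Ioo ν hε'
      _ ≤ ε := min_le_left _ _
  rcases hu.2.eq_or_lt with rfl | hu1
  · have hall : {p | distribTransform ν p ≤ 1} = univ :=
      eq_univ_of_forall fun p => (distribTransform_le_cdf ν p).trans (cdf_le_one ν _)
    rw [hall, probReal_univ]
  exact measureReal_distribTransform_le_of_mem_Ioo ν ⟨hu0, hu1⟩

section RandomVariable

variable {Ω : Type*} [MeasurableSpace Ω] (P : Measure Ω) [IsProbabilityMeasure P] {X : Ω → ℝ}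

theorem measureReal_distribTransform_map_le (hX : Measurable X) {u : ℝ} (hu : u ∈ Icc 0 1) :
    (P.prod volume).real {ω | distribTransform (P.map X) (Prod.map X id ω) ≤ u} = u := by
  have : IsProbabilityMeasure (P.map X) := Measure.isProbabilityMeasure_map hX.aemeasurable
  refine .trans ?_ (measureReal_distribTransform_le (P.map X) hu)
  exact ((hX.measurePreserving P).prod (MeasurePreserving.id volume)).measureReal_preimage
    (measurableSet_le (measurable_distribTransform _) measurable_const).nullMeasurableSet

theorem ae_distribTransform_map_le_cdf_iff (hX : Measurable X) (x : ℝ) :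
    ∀ᵐ ω ∂(P.prod volume),
      distribTransform (P.map X) (Prod.map X id ω) ≤ cdf (P.map X) x ↔ X ω.1 ≤ x := by
  have : IsProbabilityMeasure (P.map X) := Measure.isProbabilityMeasure_map hX.aemeasurable
  exact ((hX.measurePreserving P).prod (MeasurePreserving.id volume)).quasiMeasurePreserving.ae
    (ae_distribTransform_le_cdf_iff (P.map X) x)

theorem isCopula_measureReal_le_and_le {U V : Ω → ℝ} (hU : Measurable U) (hV : Measurable V)
    (hU_unif : ∀ u ∈ Icc (0:ℝ) 1, P.real {ω | U ω ≤ u} = u)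
    (hV_unif : ∀ v ∈ Icc (0:ℝ) 1, P.real {ω | V ω ≤ v} = v) :
    IsCopula fun u v => P.real {ω | U ω ≤ u ∧ V ω ≤ v} := by
  have ae_le_one {W : Ω → ℝ} (hW : Measurable W)
      (hW_unif : ∀ w ∈ Icc (0:ℝ) 1, P.real {ω | W ω ≤ w} = w) : ∀ᵐ ω ∂P, W ω ≤ 1 := by
    have hm : MeasurableSet {ω | W ω ≤ 1} := measurableSet_le hW measurable_const
    refine mem_ae_iff.2 ((measureReal_eq_zero_iff (measure_ne_top _ _)).1 ?_)
    rw [probReal_compl_eq_one_sub hm, hW_unif 1 ⟨zero_le_one, le_rfl⟩, sub_self]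
  have hzero := (⟨le_rfl, zero_le_one⟩ : (0:ℝ) ∈ Icc 0 1)
  refine ⟨fun u _ v _ => ⟨measureReal_nonneg, measureReal_le_one⟩, fun u _ => ?_, fun v _ => ?_,
    fun u hu => ?_, fun v hv => ?_, fun u₁ _ u₂ _ v₁ _ v₂ _ hu hv => ?_⟩
  · exact le_antisymm ((measureReal_mono fun ω h => h.2).trans_eq (hV_unif 0 hzero))
      measureReal_nonneg
  · exact le_antisymm ((measureReal_mono fun ω h => h.1).trans_eq (hU_unif 0 hzero))
      measureReal_nonneg
  · refine (measureReal_congr (eventuallyEq_set.2 ?_)).trans (hU_unif u hu)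
    filter_upwards [ae_le_one hV hV_unif] with ω h
    simp [h]
  · refine (measureReal_congr (eventuallyEq_set.2 ?_)).trans (hV_unif v hv)
    filter_upwards [ae_le_one hU hU_unif] with ω h
    simp [h]
  · have := measureReal_inter_add_inter_le P (A₁ := {ω | U ω ≤ u₁}) (A₂ := {ω | U ω ≤ u₂})
      (B₁ := {ω | V ω ≤ v₁}) (B₂ := {ω | V ω ≤ v₂}) (fun ω (h : U ω ≤ u₁) => h.trans hu)
      (fun ω (h : V ω ≤ v₁) => h.trans hv)
      ((measurableSet_le hU measurable_const).inter (measurableSet_le hV measurable_const))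
    simp only [ofPred_and]
    linarith

end RandomVariable

theorem exists_isCopula_measureReal_le_and_le (μ : Measure (ℝ × ℝ)) [IsProbabilityMeasure μ] :
    ∃ C, IsCopula C ∧ ∀ x y, μ.real {p | p.1 ≤ x ∧ p.2 ≤ y} =
      C (cdf (μ.map Prod.fst) x) (cdf (μ.map Prod.snd) y) := by
  set P := μ.prod (volume : Measure I)
  set U := fun ω => distribTransform (μ.map Prod.fst) (Prod.map Prod.fst id ω)
  set V := fun ω => distribTransform (μ.map Prod.snd) (Prod.map Prod.snd id ω)
  refine ⟨fun u v => P.real {ω | U ω ≤ u ∧ V ω ≤ v},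
    isCopula_measureReal_le_and_le P
      ((measurable_distribTransform _).comp (measurable_fst.prodMap measurable_id))
      ((measurable_distribTransform _).comp (measurable_snd.prodMap measurable_id))
      (fun u => measureReal_distribTransform_map_le μ measurable_fst)
      (fun v => measureReal_distribTransform_map_le μ measurable_snd), fun x y => ?_⟩
  calc μ.real {p | p.1 ≤ x ∧ p.2 ≤ y} = P.real ({p | p.1 ≤ x ∧ p.2 ≤ y} ×ˢ univ) := by
        rw [measureReal_prod_prod, probReal_univ, mul_one]
    _ = P.real {ω | U ω ≤ cdf (μ.map Prod.fst) x ∧ V ω ≤ cdf (μ.map Prod.snd) y} := by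
        refine measureReal_congr (eventuallyEq_set.2 ?_)
        filter_upwards [ae_distribTransform_map_le_cdf_iff μ measurable_fst x,
          ae_distribTransform_map_le_cdf_iff μ measurable_snd y] with ω hx hy
        simp [U, V, hx, hy]

theorem Ioo_subset_range_cdf {ν : Measure ℝ} (hν : Continuous (cdf ν)) :
    Ioo 0 1 ⊆ range (cdf ν) := fun _ hu =>
  mem_range_of_exists_le_of_exists_ge hν
    ((tendsto_cdf_atBot ν).eventually (ge_mem_nhds hu.1)).exists
    ((tendsto_cdf_atTop ν).eventually (le_mem_nhds hu.2)).exists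

end ProbabilityTheory

theorem IsCopula.eqOn_of_comp_eq {C₁ C₂ : ℝ → ℝ → ℝ} (h₁ : IsCopula C₁) (h₂ : IsCopula C₂)
    {α β : Type*} {f : α → ℝ} {g : β → ℝ} (hf : Ioo 0 1 ⊆ range f) (hg : Ioo 0 1 ⊆ range g)
    (h : ∀ x y, C₁ (f x) (g y) = C₂ (f x) (g y)) :
    ∀ u ∈ Icc (0:ℝ) 1, ∀ v ∈ Icc (0:ℝ) 1, C₁ u v = C₂ u v := by
  obtain ⟨-, h₁u0, h₁0v, h₁u1, h₁1v, -⟩ := h₁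
  obtain ⟨-, h₂u0, h₂0v, h₂u1, h₂1v, -⟩ := h₂
  intro u hu v hv
  rcases hu.1.eq_or_lt with rfl | hu0
  · rw [h₁0v v hv, h₂0v v hv]
  rcases hu.2.eq_or_lt with rfl | hu1
  · rw [h₁1v v hv, h₂1v v hv]
  rcases hv.1.eq_or_lt with rfl | hv0
  · rw [h₁u0 u hu, h₂u0 u hu]
  rcases hv.2.eq_or_lt with rfl | hv1
  · rw [h₁u1 u hu, h₂u1 u hu]
  obtain ⟨x, rfl⟩ := hf ⟨hu0, hu1⟩
  obtain ⟨y, rfl⟩ := hg ⟨hv0, hv1⟩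
  exact h x y

/-- **Sklar's theorem (existence and uniqueness).**
Let `(X,Y)` be a bivariate random variable, described by a probability measure `μ` on
`ℝ × ℝ`, with joint cdf `F x y = μ {p | p.1 ≤ x ∧ p.2 ≤ y}` and marginal cdfs
`FX x = μ {p | p.1 ≤ x}`, `FY y = μ {p | p.2 ≤ y}`. Then there exists a copula `C`
with `F x y = C (FX x) (FY y)` for all `x y`; moreover, if `FX` and `FY` are
continuous then such a copula is unique on `[0,1]²`. -/
theorem sklar_existence_and_uniqueness
    (μ : Measure (ℝ × ℝ)) [IsProbabilityMeasure μ]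
    (F : ℝ → ℝ → ℝ) (FX FY : ℝ → ℝ)
    (hF : ∀ x y : ℝ, F x y = (μ {p : ℝ × ℝ | p.1 ≤ x ∧ p.2 ≤ y}).toReal)
    (hFX : ∀ x : ℝ, FX x = (μ {p : ℝ × ℝ | p.1 ≤ x}).toReal)
    (hFY : ∀ y : ℝ, FY y = (μ {p : ℝ × ℝ | p.2 ≤ y}).toReal) :
    (∃ C : ℝ → ℝ → ℝ, IsCopula C ∧ ∀ x y : ℝ, F x y = C (FX x) (FY y)) ∧
    (Continuous FX → Continuous FY →
      ∀ C₁ C₂ : ℝ → ℝ → ℝ, IsCopula C₁ → IsCopula C₂ →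
        (∀ x y : ℝ, F x y = C₁ (FX x) (FY y)) →
        (∀ x y : ℝ, F x y = C₂ (FX x) (FY y)) →
        ∀ u ∈ Icc (0:ℝ) 1, ∀ v ∈ Icc (0:ℝ) 1, C₁ u v = C₂ u v) := by
  have : IsProbabilityMeasure (μ.map Prod.fst) := Measure.isProbabilityMeasure_map (by fun_prop)
  have : IsProbabilityMeasure (μ.map Prod.snd) := Measure.isProbabilityMeasure_map (by fun_prop)
  obtain rfl : F = fun x y => μ.real {p | p.1 ≤ x ∧ p.2 ≤ y} := funext₂ hF
  obtain rfl : FX = cdf (μ.map Prod.fst) := funext fun x => by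
    rw [hFX, cdf_eq_real, map_measureReal_apply measurable_fst measurableSet_Iic]; rfl
  obtain rfl : FY = cdf (μ.map Prod.snd) := funext fun y => by
    rw [hFY, cdf_eq_real, map_measureReal_apply measurable_snd measurableSet_Iic]; rfl
  exact ⟨exists_isCopula_measureReal_le_and_le μ, fun hcX hcY C₁ C₂ h₁ h₂ hC₁ hC₂ =>
    h₁.eqOn_of_comp_eq h₂ (Ioo_subset_range_cdf hcX) (Ioo_subset_range_cdf hcY)
      fun x y => (hC₁ x y).symm.trans (hC₂ x y)⟩
end

section
/- Sklar's theorem (converse part): If C : [0,1]² → [0,1] is a bivariate copula and F_X, F_Y : ℝ → [0,1] are one-dimensional cumulative distribution functions (monotone nondecreasing, right-continuous, with limit 0 at −∞ and 1 at +∞), then the function H(x,y) := C(F_X(x), F_Y(y)) is a bivariate cumulative distribution function: it is 2-increasing (H(x₂,y₂) − H(x₁,y₂) − H(x₂,y₁) + H(x₁,y₁) ≥ 0 for x₁ ≤ x₂, y₁ ≤ y₂), right-continuous in each variable, tends to 0 as x → −∞ or y → −∞, and tends to 1 as both x → +∞ and y → +∞. -/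
open Set Filter Topology

/-- A one-dimensional cumulative distribution function with values in `[0,1]`:
monotone nondecreasing, right-continuous, with limit `0` at `-∞` and `1` at `+∞`. -/
def IsCDF (F : ℝ → ℝ) : Prop :=
  Monotone F ∧ (∀ x : ℝ, ContinuousWithinAt F (Ici x) x) ∧
  Tendsto F atBot (𝓝 0) ∧ Tendsto F atTop (𝓝 1) ∧ (∀ x : ℝ, F x ∈ Icc (0:ℝ) 1)

/-!
Every copula is nondecreasing and 1-Lipschitz in each variable on `[0,1]` (compare the rectangle
inequality with the boundary values `C u 0 = 0` and `C u 1 = u`), and satisfies the Fréchet bounds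
`max (u + v - 1) 0 ≤ C u v ≤ min u v`. Right-continuity of `H` then follows by composing the
Lipschitz sections of `C` with the right-continuous marginals, and the limits follow by squeezing
`H` between the Fréchet bounds evaluated at the marginals.
-/

namespace IsCopula

variable {C : ℝ → ℝ → ℝ} {u u' v v' : ℝ}

theorem rectangle_nonneg (hC : IsCopula C) (hu : u ∈ Icc (0:ℝ) 1) (hu' : u' ∈ Icc (0:ℝ) 1)
    (hv : v ∈ Icc (0:ℝ) 1) (hv' : v' ∈ Icc (0:ℝ) 1) (huu' : u ≤ u') (hvv' : v ≤ v') :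
    0 ≤ C u' v' - C u v' - C u' v + C u v :=
  hC.2.2.2.2.2 u hu u' hu' v hv v' hv' huu' hvv'

theorem nonneg (hC : IsCopula C) (hu : u ∈ Icc (0:ℝ) 1) (hv : v ∈ Icc (0:ℝ) 1) :
    0 ≤ C u v :=
  (hC.1 u hu v hv).1

theorem le_one (hC : IsCopula C) (hu : u ∈ Icc (0:ℝ) 1) (hv : v ∈ Icc (0:ℝ) 1) :
    C u v ≤ 1 :=
  (hC.1 u hu v hv).2

theorem apply_zero_right (hC : IsCopula C) (hu : u ∈ Icc (0:ℝ) 1) : C u 0 = 0 := hC.2.1 u hu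

theorem apply_zero_left (hC : IsCopula C) (hv : v ∈ Icc (0:ℝ) 1) : C 0 v = 0 := hC.2.2.1 v hv

theorem apply_one_right (hC : IsCopula C) (hu : u ∈ Icc (0:ℝ) 1) : C u 1 = u := hC.2.2.2.1 u hu

theorem apply_one_left (hC : IsCopula C) (hv : v ∈ Icc (0:ℝ) 1) : C 1 v = v :=
  hC.2.2.2.2.1 v hv

protected theorem flip (hC : IsCopula C) : IsCopula (flip C) := by
  refine ⟨fun u hu v hv => hC.1 v hv u hu, fun _ => hC.apply_zero_left,
    fun _ => hC.apply_zero_right, fun _ => hC.apply_one_left, fun _ => hC.apply_one_right, ?_⟩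
  intro u hu u' hu' v hv v' hv' huu' hvv'
  have := hC.rectangle_nonneg hv hv' hu hu' hvv' huu'
  simp only [flip]
  linarith

theorem apply_le_apply_left (hC : IsCopula C) (hu : u ∈ Icc (0:ℝ) 1) (hu' : u' ∈ Icc (0:ℝ) 1)
    (hv : v ∈ Icc (0:ℝ) 1) (huu' : u ≤ u') : C u v ≤ C u' v := by
  have := hC.rectangle_nonneg hu hu' (left_mem_Icc.2 zero_le_one) hv huu' hv.1
  rw [hC.apply_zero_right hu, hC.apply_zero_right hu'] at this
  linarith

theorem apply_le_apply_add_left (hC : IsCopula C) (hu : u ∈ Icc (0:ℝ) 1)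
    (hu' : u' ∈ Icc (0:ℝ) 1) (hv : v ∈ Icc (0:ℝ) 1) (huu' : u ≤ u') :
    C u' v ≤ C u v + (u' - u) := by
  have := hC.rectangle_nonneg hu hu' hv (right_mem_Icc.2 zero_le_one) huu' hv.2
  rw [hC.apply_one_right hu, hC.apply_one_right hu'] at this
  linarith

theorem lipschitzOnWith_left (hC : IsCopula C) (hv : v ∈ Icc (0:ℝ) 1) :
    LipschitzOnWith 1 (fun u => C u v) (Icc 0 1) := by
  refine LipschitzOnWith.of_le_add fun u hu u' hu' => ?_
  rw [Real.dist_eq]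
  rcases le_total u u' with huu' | hu'u
  · linarith [hC.apply_le_apply_left hu hu' hv huu', abs_nonneg (u - u')]
  · linarith [hC.apply_le_apply_add_left hu' hu hv hu'u, le_abs_self (u - u')]

theorem le_left (hC : IsCopula C) (hu : u ∈ Icc (0:ℝ) 1) (hv : v ∈ Icc (0:ℝ) 1) :
    C u v ≤ u := by
  have := hC.apply_le_apply_add_left (left_mem_Icc.2 zero_le_one) hu hv hu.1
  rwa [hC.apply_zero_left hv, zero_add, sub_zero] at this

theorem add_sub_one_le (hC : IsCopula C) (hu : u ∈ Icc (0:ℝ) 1) (hv : v ∈ Icc (0:ℝ) 1) :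
    u + v - 1 ≤ C u v := by
  have h1 : (1:ℝ) ∈ Icc (0:ℝ) 1 := right_mem_Icc.2 zero_le_one
  have := hC.rectangle_nonneg hu h1 hv h1 hu.2 hv.2
  rw [hC.apply_one_right hu, hC.apply_one_left hv, hC.apply_one_left h1] at this
  linarith

end IsCopula

/-- **Sklar's theorem (converse part).** If `C` is a bivariate copula and `FX`, `FY` are
one-dimensional cdfs, then `H x y := C (FX x) (FY y)` is a bivariate cdf: it is
2-increasing, right-continuous in each variable, tends to `0` as `x → -∞` or `y → -∞`,
and tends to `1` as both `x → +∞` and `y → +∞`. -/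
theorem sklar_converse (C : ℝ → ℝ → ℝ) (hC : IsCopula C)
    (FX FY : ℝ → ℝ) (hFX : IsCDF FX) (hFY : IsCDF FY)
    (H : ℝ → ℝ → ℝ) (hH : ∀ x y : ℝ, H x y = C (FX x) (FY y)) :
    (∀ x₁ x₂ y₁ y₂ : ℝ, x₁ ≤ x₂ → y₁ ≤ y₂ →
      0 ≤ H x₂ y₂ - H x₁ y₂ - H x₂ y₁ + H x₁ y₁) ∧
    (∀ x y : ℝ, ContinuousWithinAt (fun x' => H x' y) (Ici x) x) ∧
    (∀ x y : ℝ, ContinuousWithinAt (fun y' => H x y') (Ici y) y) ∧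
    (∀ y : ℝ, Tendsto (fun x => H x y) atBot (𝓝 0)) ∧
    (∀ x : ℝ, Tendsto (fun y => H x y) atBot (𝓝 0)) ∧
    Tendsto (fun p : ℝ × ℝ => H p.1 p.2) (atTop ×ˢ atTop) (𝓝 1) := by
  obtain ⟨hXm, hXrc, hXbot, hXtop, hXI⟩ := hFX
  obtain ⟨hYm, hYrc, hYbot, hYtop, hYI⟩ := hFY
  simp only [hH]
  refine ⟨fun x₁ x₂ y₁ y₂ hx hy => ?_, fun x y => ?_, fun x y => ?_, fun y => ?_, fun x => ?_, ?_⟩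
  · exact hC.rectangle_nonneg (hXI x₁) (hXI x₂) (hYI y₁) (hYI y₂) (hXm hx) (hYm hy)
  · exact ((hC.lipschitzOnWith_left (hYI y)).continuousOn.continuousWithinAt (hXI x)).comp
      (hXrc x) fun x' _ => hXI x'
  · exact ((hC.flip.lipschitzOnWith_left (hXI x)).continuousOn.continuousWithinAt (hYI y)).comp
      (hYrc y) fun y' _ => hYI y'
  · exact squeeze_zero (fun x => hC.nonneg (hXI x) (hYI y))
      (fun x => hC.le_left (hXI x) (hYI y)) hXbot
  · exact squeeze_zero (fun y => hC.nonneg (hXI x) (hYI y))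
      (fun y => hC.flip.le_left (hYI y) (hXI x)) hYbot
  · have hlower : Tendsto (fun p : ℝ × ℝ => FX p.1 + FY p.2 - 1) (atTop ×ˢ atTop) (𝓝 1) := by
      simpa using ((hXtop.comp tendsto_fst).add (hYtop.comp tendsto_snd)).sub_const 1
    exact tendsto_of_tendsto_of_tendsto_of_le_of_le hlower tendsto_const_nhds
      (fun p => hC.add_sub_one_le (hXI p.1) (hYI p.2))
      (fun p => hC.le_one (hXI p.1) (hYI p.2))
end

section
/- Maximum likelihood estimator of the Marshall–Olkin parameter for a complete sample: let n₁, n₂, n₃ be natural numbers with n₃ ≥ 1 and n₁ + n₂ ≥ 1, let n = n₁ + n₂ + n₃, and let S ≥ 0 be a real number. Then the log-likelihood function f(θ) = (n₁+n₂)·ln(1−θ) + n₃·ln θ + θ·S is strictly concave on (0,1) and attains its maximum on (0,1) at the unique point θ̂ = (1 + ẑ)^{−1}, where ẑ = ( n − 2n₃ − S + √(n² + S² − S(2n − 4n₃)) ) / (2n₃); equivalently θ̂ = (1 + exp(−ψ̂))^{−1} with ψ̂ = −ln ẑ. -/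
open Set Real

/-!
The log-likelihood is a positive multiple of `log θ` plus concave terms, hence strictly concave on
`(0, 1)`, so its critical point there is the unique maximiser. Writing `θ = (1 + z)⁻¹`, the
equation `f'(θ) = 0` becomes `z⁻¹ · (n₃ z² + (n₃ - n₁ - n₂ + S) z - (n₁ + n₂)) = 0`, and `ẑ` is the
positive root of this quadratic, which exists because the product of its roots is negative.
-/

lemma StrictConcaveOn.const_mul {E : Type*} [AddCommMonoid E] [Module ℝ E] {s : Set E}
    {f : E → ℝ} {c : ℝ} (hc : 0 < c) (hf : StrictConcaveOn ℝ s f) :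
    StrictConcaveOn ℝ s (fun x => c * f x) :=
  ⟨hf.1, fun x hx y hy hxy a b ha hb hab => by
    simpa only [smul_eq_mul, mul_left_comm a c, mul_left_comm b c, ← mul_add]
      using mul_lt_mul_of_pos_left (hf.2 hx hy hxy ha hb hab) hc⟩

lemma StrictConcaveOn.lt_of_hasDerivAt_eq_zero {s : Set ℝ} {f : ℝ → ℝ} {x y : ℝ}
    (hf : StrictConcaveOn ℝ s f) (hx : x ∈ s) (hy : y ∈ s) (hyx : y ≠ x)
    (hfx : HasDerivAt f 0 x) : f y < f x := by
  rcases hyx.lt_or_gt with h | h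
  · have := hf.lt_slope_of_hasDerivAt hy hx h hfx
    rw [slope_def_field, lt_div_iff₀ (sub_pos.2 h), zero_mul] at this
    linarith
  · have := hf.slope_lt_of_hasDerivAt hx hy h hfx
    rw [slope_def_field, div_lt_iff₀ (sub_pos.2 h), zero_mul] at this
    linarith

lemma concaveOn_log_one_sub : ConcaveOn ℝ (Iio 1) (fun θ : ℝ => log (1 - θ)) := by
  let g : ℝ →ᵃ[ℝ] ℝ := AffineMap.lineMap 1 0
  have h := strictConcaveOn_log_Ioi.concaveOn.comp_affineMap g
  have hs : g ⁻¹' Ioi 0 = Iio 1 := by ext; simp [g, AffineMap.lineMap_apply_module]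
  have hf : log ∘ g = fun θ => log (1 - θ) := by ext; simp [g, AffineMap.lineMap_apply_module]
  rwa [hs, hf] at h

lemma quadratic_root_pos_and_eq_zero {a b c z : ℝ} (ha : 0 < a) (hb : 0 < b)
    (hz : z = (-c + √(c ^ 2 + 4 * a * b)) / (2 * b)) :
    0 < z ∧ b * z ^ 2 + c * z - a = 0 := by
  have hdisc : 0 ≤ c ^ 2 + 4 * a * b := by positivity
  constructor
  · rw [hz]
    refine div_pos ?_ (by positivity)
    have : |c| < √(c ^ 2 + 4 * a * b) := by
      rw [← sqrt_sq_eq_abs]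
      exact sqrt_lt_sqrt (sq_nonneg c) (by nlinarith)
    linarith [le_abs_self c]
  · have h := (quadratic_eq_zero_iff hb.ne' (c := -a) (s := √(c ^ 2 + 4 * a * b))
      (by rw [discrim, mul_self_sqrt hdisc]; ring) z).2 (.inl hz)
    linear_combination h

noncomputable def moLogLikelihood (a b S θ : ℝ) : ℝ :=
  a * log (1 - θ) + b * log θ + θ * S

section moLogLikelihood

variable {a b : ℝ} (S : ℝ)

lemma strictConcaveOn_moLogLikelihood (ha : 0 ≤ a) (hb : 0 < b) :
    StrictConcaveOn ℝ (Ioo 0 1) (moLogLikelihood a b S) := by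
  have hlog : StrictConcaveOn ℝ (Ioo 0 1) (fun θ => b * log θ) :=
    (strictConcaveOn_log_Ioi.subset Ioo_subset_Ioi_self (convex_Ioo 0 1)).const_mul hb
  have hlog_one_sub : ConcaveOn ℝ (Ioo 0 1) (fun θ => a * log (1 - θ)) :=
    (concaveOn_log_one_sub.subset Ioo_subset_Iio_self (convex_Ioo 0 1)).smul ha
  have hlin : ConcaveOn ℝ (Ioo 0 1) (fun θ => θ * S) :=
    (LinearMap.mulRight ℝ S).concaveOn (convex_Ioo 0 1)
  exact (hlog.add_concaveOn hlog_one_sub).add_concaveOn hlin |>.congr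
    fun θ _ => by simp only [moLogLikelihood, Pi.add_apply]; ring

lemma hasDerivAt_moLogLikelihood {θ : ℝ} (h0 : θ ≠ 0) (h1 : θ ≠ 1) :
    HasDerivAt (moLogLikelihood a b S) (-a / (1 - θ) + b / θ + S) θ := by
  have h_one_sub : HasDerivAt (fun θ => log (1 - θ)) (-1 / (1 - θ)) θ :=
    ((hasDerivAt_id θ).const_sub 1).log (sub_ne_zero.2 h1.symm)
  have h := ((h_one_sub.const_mul a).add ((hasDerivAt_log h0).const_mul b)).add
    ((hasDerivAt_id θ).mul_const S)
  exact h.congr_deriv (by ring)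

lemma hasDerivAt_moLogLikelihood_inv_one_add {z : ℝ} (hz : 0 < z) :
    HasDerivAt (moLogLikelihood a b S) ((b * z ^ 2 + (b - a + S) * z - a) / z) (1 + z)⁻¹ := by
  have h1z : 1 + z ≠ 0 := by positivity
  have hz0 : z ≠ 0 := hz.ne'
  refine (hasDerivAt_moLogLikelihood S (by positivity) ?_).congr_deriv ?_
  · rw [Ne, inv_eq_one]; linarith
  · rw [show 1 - (1 + z)⁻¹ = z / (1 + z) by field_simp; ring]
    field_simp
    ring

end moLogLikelihood

theorem MO_mle_complete_sample_general (n₁ n₂ n₃ : ℕ) (hn₃ : 1 ≤ n₃) (hn₁₂ : 1 ≤ n₁ + n₂)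
    (n : ℕ) (hn : n = n₁ + n₂ + n₃) (S : ℝ)
    (f : ℝ → ℝ)
    (hf : ∀ θ : ℝ, f θ = ((n₁:ℝ) + n₂) * Real.log (1 - θ) + (n₃:ℝ) * Real.log θ + θ * S)
    (z θhat : ℝ)
    (hz : z = ((n:ℝ) - 2*(n₃:ℝ) - S +
      Real.sqrt ((n:ℝ)^2 + S^2 - S * (2*(n:ℝ) - 4*(n₃:ℝ)))) / (2*(n₃:ℝ)))
    (hθhat : θhat = (1 + z)⁻¹) :
    StrictConcaveOn ℝ (Ioo (0:ℝ) 1) f ∧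
    θhat ∈ Ioo (0:ℝ) 1 ∧
    (∀ θ ∈ Ioo (0:ℝ) 1, θ ≠ θhat → f θ < f θhat) ∧
    θhat = (1 + Real.exp (-(-Real.log z)))⁻¹ := by
  obtain rfl : f = moLogLikelihood (n₁ + n₂) n₃ S := funext hf
  have ha : (0 : ℝ) < n₁ + n₂ := by exact_mod_cast hn₁₂
  have hb : (0 : ℝ) < n₃ := by exact_mod_cast hn₃
  -- `n² + S² - S(2n - 4n₃) = (n₃ - n₁ - n₂ + S)² + 4(n₁ + n₂)n₃`
  obtain ⟨hz_pos, hz_root⟩ := quadratic_root_pos_and_eq_zero (z := z) ha hb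
    (c := n₃ - (n₁ + n₂) + S) (by rw [hz, hn]; push_cast; congr 2 <;> ring_nf)
  have hconc := strictConcaveOn_moLogLikelihood S ha.le hb
  have hcrit : HasDerivAt (moLogLikelihood (n₁ + n₂) n₃ S) 0 θhat := by
    have h := hasDerivAt_moLogLikelihood_inv_one_add S (a := n₁ + n₂) (b := n₃) hz_pos
    rwa [hz_root, zero_div, ← hθhat] at h
  have hmem : θhat ∈ Ioo (0 : ℝ) 1 :=
    hθhat ▸ ⟨by positivity, inv_lt_one_of_one_lt₀ (by linarith)⟩
  exact ⟨hconc, hmem, fun θ hθ hne => hconc.lt_of_hasDerivAt_eq_zero hmem hθ hne hcrit,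
    by rw [neg_neg, exp_log hz_pos, hθhat]⟩

/-- Maximum likelihood estimator of the Marshall–Olkin parameter for a complete sample:
the log-likelihood `f(θ) = (n₁+n₂)·ln(1-θ) + n₃·ln θ + θ·S` (with `n₃ ≥ 1`,
`n₁+n₂ ≥ 1`, `S ≥ 0`) is strictly concave on `(0,1)` and attains its maximum on `(0,1)`
at the unique point `θ̂ = (1+ẑ)⁻¹`, where
`ẑ = (n - 2n₃ - S + √(n² + S² - S(2n - 4n₃)))/(2n₃)` and `n = n₁+n₂+n₃`;
equivalently `θ̂ = (1 + exp(-ψ̂))⁻¹` with `ψ̂ = -ln ẑ`. -/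
theorem MO_mle_complete_sample (n₁ n₂ n₃ : ℕ) (hn₃ : 1 ≤ n₃) (hn₁₂ : 1 ≤ n₁ + n₂)
    (n : ℕ) (hn : n = n₁ + n₂ + n₃) (S : ℝ) (hS : 0 ≤ S)
    (f : ℝ → ℝ)
    (hf : ∀ θ : ℝ, f θ = ((n₁:ℝ) + n₂) * Real.log (1 - θ) + (n₃:ℝ) * Real.log θ + θ * S)
    (z θhat : ℝ)
    (hz : z = ((n:ℝ) - 2*(n₃:ℝ) - S +
      Real.sqrt ((n:ℝ)^2 + S^2 - S * (2*(n:ℝ) - 4*(n₃:ℝ)))) / (2*(n₃:ℝ)))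
    (hθhat : θhat = (1 + z)⁻¹) :
    StrictConcaveOn ℝ (Ioo (0:ℝ) 1) f ∧
    θhat ∈ Ioo (0:ℝ) 1 ∧
    (∀ θ ∈ Ioo (0:ℝ) 1, θ ≠ θhat → f θ < f θhat) ∧
    θhat = (1 + Real.exp (-(-Real.log z)))⁻¹ :=
  MO_mle_complete_sample_general n₁ n₂ n₃ hn₃ hn₁₂ n hn S f hf z θhat hz hθhat
end

section
/- Critical point equation for the censored Marshall–Olkin log-likelihood: let m₁, m₂, m₃, r, s be natural numbers with m₃ ≥ 1, m = m₁+m₂+m₃, let S₁, S₂, S_max be real and S_min = S₁+S₂−S_max, and let g(ψ) = −(m₁+m₂+r+s)·ψ − (m+r+s)·ln(1+e^{−ψ}) − (S₁+S₂)·e^{−ψ}/(1+e^{−ψ}) − S_max/(1+e^{−ψ}). Then for every ψ ∈ ℝ, g'(ψ) = 0 if and only if m₃·e^{−2ψ} − (m+r+s−2m₃−S_min)·e^{−ψ} − (m+r+s−m₃) = 0. -/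
open Real

/-!
In terms of `θ = sigmoid ψ = (1 + e^{-ψ})⁻¹` the log-likelihood is
`g(ψ) = -a ψ + b log θ + S_min θ - (S₁ + S₂)` with `a = m₁+m₂+r+s`, `b = m+r+s`, and
`θ' = θ (1 - θ)`. Hence `g' = -a + b (1 - θ) + S_min θ (1 - θ)`; since `1 - θ = t θ` for
`t = e^{-ψ}`, this equals `θ² ((b - a) t² + (b - 2a + S_min) t - a)`, and `θ > 0`.
-/

namespace Real

lemma log_one_add_exp_neg (x : ℝ) : log (1 + exp (-x)) = -log (sigmoid x) := by
  rw [sigmoid_def, log_inv, neg_neg]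

lemma exp_neg_div_one_add_exp_neg (x : ℝ) : exp (-x) / (1 + exp (-x)) = 1 - sigmoid x := by
  rw [← sigmoid_neg, ← sigmoid_mul_rexp_neg, sigmoid_def, div_eq_inv_mul]

lemma inv_one_add_exp_neg (x : ℝ) : 1 / (1 + exp (-x)) = sigmoid x := by
  rw [sigmoid_def, one_div]

lemma hasDerivAt_log_sigmoid (x : ℝ) : HasDerivAt (fun x ↦ log (sigmoid x)) (1 - sigmoid x) x := by
  convert (hasDerivAt_sigmoid x).log (sigmoid_pos x).ne' using 1
  field_simp [(sigmoid_pos x).ne']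

lemma hasDerivAt_affine_add_log_sigmoid_add_sigmoid (a b c d x : ℝ) :
    HasDerivAt (fun x ↦ -a * x + b * log (sigmoid x) + c * sigmoid x + d)
      (-a + b * (1 - sigmoid x) + c * (sigmoid x * (1 - sigmoid x))) x := by
  have h := ((((hasDerivAt_id x).const_mul (-a)).add
    ((hasDerivAt_log_sigmoid x).const_mul b)).add ((hasDerivAt_sigmoid x).const_mul c)).add_const d
  simpa using h

lemma neg_add_mul_one_sub_sigmoid_eq (a b c x : ℝ) :
    -a + b * (1 - sigmoid x) + c * (sigmoid x * (1 - sigmoid x)) =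
      sigmoid x ^ 2 * ((b - a) * exp (-x) ^ 2 + (b - 2 * a + c) * exp (-x) - a) := by
  have hθ : sigmoid x * (1 + exp (-x)) = 1 := by
    rw [sigmoid_def, inv_mul_cancel₀ (by positivity)]
  have h1θ : 1 - sigmoid x = exp (-x) * sigmoid x := by linear_combination -hθ
  rw [h1θ]
  linear_combination (a * (1 + sigmoid x * (1 + exp (-x))) - b * sigmoid x * exp (-x)) * hθ

lemma deriv_affine_add_log_sigmoid_add_sigmoid_eq_zero_iff (a b c d x : ℝ) :
    deriv (fun x ↦ -a * x + b * log (sigmoid x) + c * sigmoid x + d) x = 0 ↔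
      (b - a) * exp (-x) ^ 2 + (b - 2 * a + c) * exp (-x) - a = 0 := by
  rw [(hasDerivAt_affine_add_log_sigmoid_add_sigmoid a b c d x).deriv,
    neg_add_mul_one_sub_sigmoid_eq, mul_eq_zero, or_iff_right (pow_pos (sigmoid_pos x) 2).ne']

end Real

theorem censored_loglik_critical_point_general (m₁ m₂ m₃ r s : ℕ)
    (m : ℕ) (hm : m = m₁ + m₂ + m₃)
    (S₁ S₂ Smax Smin : ℝ) (hSmin : Smin = S₁ + S₂ - Smax)
    (g : ℝ → ℝ)
    (hg : ∀ ψ : ℝ, g ψ =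
      -((m₁:ℝ) + m₂ + r + s) * ψ - ((m:ℝ) + r + s) * Real.log (1 + Real.exp (-ψ))
        - (S₁ + S₂) * Real.exp (-ψ) / (1 + Real.exp (-ψ))
        - Smax / (1 + Real.exp (-ψ))) :
    ∀ ψ : ℝ, deriv g ψ = 0 ↔
      (m₃:ℝ) * Real.exp (-2*ψ) - ((m:ℝ) + r + s - 2*(m₃:ℝ) - Smin) * Real.exp (-ψ)
        - ((m:ℝ) + r + s - m₃) = 0 := by
  intro ψ
  have hg_sigmoid : g = fun ψ ↦ -((m₁:ℝ) + m₂ + r + s) * ψ + ((m:ℝ) + r + s) * log (sigmoid ψ)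
      + Smin * sigmoid ψ + -(S₁ + S₂) := by
    funext ψ
    rw [hg, log_one_add_exp_neg, mul_div_assoc, exp_neg_div_one_add_exp_neg, div_eq_mul_one_div,
      inv_one_add_exp_neg, hSmin]
    ring
  have hexp : exp (-2 * ψ) = exp (-ψ) ^ 2 := by rw [← exp_nat_mul]; ring_nf
  have hmR : (m:ℝ) = m₁ + m₂ + m₃ := by exact_mod_cast hm
  rw [hg_sigmoid, deriv_affine_add_log_sigmoid_add_sigmoid_eq_zero_iff, hexp, hmR]
  ring_nf

/-- Critical point equation for the censored Marshall–Olkin log-likelihood: with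
`m = m₁+m₂+m₃` (`m₃ ≥ 1`), `S_min = S₁+S₂-S_max` and
`g(ψ) = -(m₁+m₂+r+s)·ψ - (m+r+s)·ln(1+e^{-ψ}) - (S₁+S₂)·e^{-ψ}/(1+e^{-ψ}) - S_max/(1+e^{-ψ})`,
for every `ψ ∈ ℝ`: `g'(ψ) = 0` if and only if
`m₃·e^{-2ψ} - (m+r+s-2m₃-S_min)·e^{-ψ} - (m+r+s-m₃) = 0`. -/
theorem censored_loglik_critical_point (m₁ m₂ m₃ r s : ℕ) (hm₃ : 1 ≤ m₃)
    (m : ℕ) (hm : m = m₁ + m₂ + m₃)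
    (S₁ S₂ Smax Smin : ℝ) (hSmin : Smin = S₁ + S₂ - Smax)
    (g : ℝ → ℝ)
    (hg : ∀ ψ : ℝ, g ψ =
      -((m₁:ℝ) + m₂ + r + s) * ψ - ((m:ℝ) + r + s) * Real.log (1 + Real.exp (-ψ))
        - (S₁ + S₂) * Real.exp (-ψ) / (1 + Real.exp (-ψ))
        - Smax / (1 + Real.exp (-ψ))) :
    ∀ ψ : ℝ, deriv g ψ = 0 ↔
      (m₃:ℝ) * Real.exp (-2*ψ) - ((m:ℝ) + r + s - 2*(m₃:ℝ) - Smin) * Real.exp (-ψ)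
        - ((m:ℝ) + r + s - m₃) = 0 :=
  censored_loglik_critical_point_general m₁ m₂ m₃ r s m hm S₁ S₂ Smax Smin hSmin g hg
end

section
/- Global maximum of the censored Marshall–Olkin log-likelihood: let m₁, m₂, m₃, r, s be natural numbers with m₃ ≥ 1 and m₁+m₂+r+s ≥ 1, m = m₁+m₂+m₃, let S₁, S₂, S_max be real with S_min = S₁+S₂−S_max, and let g(ψ) = −(m₁+m₂+r+s)·ψ − (m+r+s)·ln(1+e^{−ψ}) − (S₁+S₂)·e^{−ψ}/(1+e^{−ψ}) − S_max/(1+e^{−ψ}). Then g attains a strict global maximum over ℝ at the unique point ψ̂ = −ln z₁, where z₁ = ( m+r+s−2m₃−S_min + √((m+r+s−2m₃−S_min)² + 4m₃(m+r+s−m₃)) ) / (2m₃); that is, g(ψ) < g(ψ̂) for all ψ ≠ ψ̂. Consequently the censored maximum likelihood estimator θ̂_c = (1+e^{−ψ̂})^{−1} = (1+z₁)^{−1} lies in (0,1). -/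
open Set Real

/-!
With `A = m₁ + m₂ + r + s` and `M = m₃`, the substitution `z = e^{-ψ}` turns `g` into
`A log z - (A + M) log (1 + z) - (S₁ + S₂) z / (1 + z) - S_max / (1 + z)`, whose derivative is
`(-M z² + (A - M - S_min) z + A) / (z (1 + z)²)`. As `M, A > 0`, this quadratic numerator has one
negative root and one positive root `z₁`, so the function strictly increases on `(0, z₁]` and
strictly decreases on `[z₁, ∞)`; since `ψ ↦ e^{-ψ}` is injective, `ψ̂ = -log z₁` is the strict
global maximiser of `g`.
-/

theorem apply_lt_apply_of_hasDerivAt_sign_change {f f' : ℝ → ℝ} {a b : ℝ} (hab : a < b)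
    (hf : ∀ x ∈ Ioi a, HasDerivAt f (f' x) x)
    (hpos : ∀ x ∈ Ioo a b, 0 < f' x) (hneg : ∀ x ∈ Ioi b, f' x < 0) :
    ∀ x ∈ Ioi a, x ≠ b → f x < f b := by
  have hcont : ContinuousOn f (Ioi a) := fun x hx => (hf x hx).continuousAt.continuousWithinAt
  have hmono : StrictMonoOn f (Ioc a b) := by
    refine strictMonoOn_of_hasDerivWithinAt_pos (f' := f') (convex_Ioc a b)
      (hcont.mono Ioc_subset_Ioi_self) (fun x hx => ?_) (fun x hx => ?_)
    all_goals rw [interior_Ioc] at hx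
    exacts [(hf x hx.1).hasDerivWithinAt, hpos x hx]
  have hanti : StrictAntiOn f (Ici b) := by
    refine strictAntiOn_of_hasDerivWithinAt_neg (f' := f') (convex_Ici b)
      (hcont.mono (Ici_subset_Ioi.2 hab)) (fun x hx => ?_) (fun x hx => ?_)
    all_goals rw [interior_Ici] at hx
    exacts [(hf x (hab.trans hx)).hasDerivWithinAt, hneg x hx]
  intro x hx hxb
  rcases hxb.lt_or_gt with hlt | hgt
  · exact hmono ⟨hx, hlt.le⟩ ⟨hab, le_rfl⟩ hlt
  · exact hanti (mem_Ici.2 le_rfl) (mem_Ici.2 hgt.le) hgt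

section Quadratic

variable {a b c : ℝ}

theorem neg_quadratic_eq_mul (ha : a ≠ 0) (hd : 0 ≤ b ^ 2 + 4 * a * c) (z : ℝ) :
    -a * z ^ 2 + b * z + c =
      a * ((b + √(b ^ 2 + 4 * a * c)) / (2 * a) - z) *
        (z - (b - √(b ^ 2 + 4 * a * c)) / (2 * a)) := by
  have hsq := Real.sq_sqrt hd
  set D := √(b ^ 2 + 4 * a * c)
  field_simp
  linear_combination -hsq

theorem abs_lt_sqrt_sq_add_four_mul_mul (ha : 0 < a) (hc : 0 < c) :
    |b| < √(b ^ 2 + 4 * a * c) := by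
  rw [← Real.sqrt_sq_eq_abs]
  exact Real.sqrt_lt_sqrt (sq_nonneg b) (by nlinarith [mul_pos ha hc])

theorem quadratic_root_plus_pos (ha : 0 < a) (hc : 0 < c) :
    0 < (b + √(b ^ 2 + 4 * a * c)) / (2 * a) := by
  have := abs_lt_sqrt_sq_add_four_mul_mul (b := b) ha hc
  have := neg_abs_le b
  exact div_pos (by linarith) (by linarith)

theorem quadratic_root_minus_neg (ha : 0 < a) (hc : 0 < c) :
    (b - √(b ^ 2 + 4 * a * c)) / (2 * a) < 0 := by
  have := abs_lt_sqrt_sq_add_four_mul_mul (b := b) ha hc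
  have := le_abs_self b
  exact div_neg_of_neg_of_pos (by linarith) (by linarith)

theorem neg_quadratic_pos_of_lt (ha : 0 < a) (hc : 0 < c) {z : ℝ} (hz₀ : 0 < z)
    (hz : z < (b + √(b ^ 2 + 4 * a * c)) / (2 * a)) : 0 < -a * z ^ 2 + b * z + c := by
  rw [neg_quadratic_eq_mul ha.ne' (by nlinarith [mul_pos ha hc, sq_nonneg b])]
  have := quadratic_root_minus_neg (b := b) ha hc
  exact mul_pos (mul_pos ha (by linarith)) (by linarith)

theorem neg_quadratic_neg_of_gt (ha : 0 < a) (hc : 0 < c) {z : ℝ}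
    (hz : (b + √(b ^ 2 + 4 * a * c)) / (2 * a) < z) : -a * z ^ 2 + b * z + c < 0 := by
  rw [neg_quadratic_eq_mul ha.ne' (by nlinarith [mul_pos ha hc, sq_nonneg b])]
  have := quadratic_root_minus_neg (b := b) ha hc
  have := quadratic_root_plus_pos (b := b) ha hc
  exact mul_neg_of_neg_of_pos (mul_neg_of_pos_of_neg ha (by linarith)) (by linarith)

end Quadratic

noncomputable def censoredLogLikOdds (A M S Smax z : ℝ) : ℝ :=
  A * log z - (A + M) * log (1 + z) - S * z / (1 + z) - Smax / (1 + z)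

theorem hasDerivAt_censoredLogLikOdds (A M S Smax : ℝ) {z : ℝ} (hz : 0 < z) :
    HasDerivAt (censoredLogLikOdds A M S Smax)
      ((-M * z ^ 2 + (A - M - (S - Smax)) * z + A) / (z * (1 + z) ^ 2)) z := by
  have h1z : (1 + z) ≠ 0 := by positivity
  have hlin : HasDerivAt (fun z : ℝ => 1 + z) 1 z := (hasDerivAt_id z).const_add 1
  have hS := ((hasDerivAt_id' z).const_mul S).div hlin h1z
  have hSmax := (hasDerivAt_const z Smax).div hlin h1z
  have := ((((hasDerivAt_log hz.ne').const_mul A).sub ((hlin.log h1z).const_mul (A + M))).sub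
    hS).sub hSmax
  refine this.congr_deriv ?_
  field_simp
  ring

/-- Global maximum of the censored Marshall–Olkin log-likelihood: with `m₃ ≥ 1`,
`m₁+m₂+r+s ≥ 1`, `m = m₁+m₂+m₃`, `S_min = S₁+S₂-S_max` and
`g(ψ) = -(m₁+m₂+r+s)·ψ - (m+r+s)·ln(1+e^{-ψ}) - (S₁+S₂)·e^{-ψ}/(1+e^{-ψ}) - S_max/(1+e^{-ψ})`,
`g` attains a strict global maximum over `ℝ` at the unique point `ψ̂ = -ln z₁`, where
`z₁ = (m+r+s-2m₃-S_min + √((m+r+s-2m₃-S_min)² + 4m₃(m+r+s-m₃)))/(2m₃)`.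
Consequently the censored MLE `θ̂_c = (1+e^{-ψ̂})⁻¹ = (1+z₁)⁻¹` lies in `(0,1)`. -/
theorem censored_loglik_global_max (m₁ m₂ m₃ r s : ℕ) (hm₃ : 1 ≤ m₃)
    (h₁ : 1 ≤ m₁ + m₂ + r + s) (m : ℕ) (hm : m = m₁ + m₂ + m₃)
    (S₁ S₂ Smax Smin : ℝ) (hSmin : Smin = S₁ + S₂ - Smax)
    (g : ℝ → ℝ)
    (hg : ∀ ψ : ℝ, g ψ =
      -((m₁:ℝ) + m₂ + r + s) * ψ - ((m:ℝ) + r + s) * Real.log (1 + Real.exp (-ψ))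
        - (S₁ + S₂) * Real.exp (-ψ) / (1 + Real.exp (-ψ))
        - Smax / (1 + Real.exp (-ψ)))
    (z₁ ψhat : ℝ)
    (hz₁ : z₁ = ((m:ℝ) + r + s - 2*(m₃:ℝ) - Smin +
      Real.sqrt (((m:ℝ) + r + s - 2*(m₃:ℝ) - Smin)^2
        + 4*(m₃:ℝ)*((m:ℝ) + r + s - m₃))) / (2*(m₃:ℝ)))
    (hψhat : ψhat = -Real.log z₁) :
    (∀ ψ : ℝ, ψ ≠ ψhat → g ψ < g ψhat) ∧
    (1 + Real.exp (-ψhat))⁻¹ = (1 + z₁)⁻¹ ∧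
    (1 + z₁)⁻¹ ∈ Ioo (0:ℝ) 1 := by
  set A : ℝ := m₁ + m₂ + r + s
  set M : ℝ := (m₃ : ℝ)
  have hA : 0 < A := by simp only [A]; exact_mod_cast h₁
  have hM : 0 < M := by simp only [M]; exact_mod_cast hm₃
  have hmrs : (m : ℝ) + r + s = A + M := by simp only [A, M, hm]; push_cast; ring
  have hg_odds : ∀ ψ, g ψ = censoredLogLikOdds A M (S₁ + S₂) Smax (exp (-ψ)) := by
    intro ψ
    rw [hg, hmrs, censoredLogLikOdds, log_exp]
    ring
  have hz₁_root :
      z₁ = (A - M - (S₁ + S₂ - Smax) + √((A - M - (S₁ + S₂ - Smax)) ^ 2 + 4 * M * A)) / (2 * M) := by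
    rw [hz₁, hmrs, hSmin]
    ring_nf
  have hz₁_pos : 0 < z₁ := hz₁_root ▸ quadratic_root_plus_pos hM hA
  have hexp : exp (-ψhat) = z₁ := by rw [hψhat, neg_neg, exp_log hz₁_pos]
  have hmax := apply_lt_apply_of_hasDerivAt_sign_change hz₁_pos
    (fun z hz => hasDerivAt_censoredLogLikOdds A M (S₁ + S₂) Smax hz)
    (fun z hz => div_pos (neg_quadratic_pos_of_lt hM hA hz.1 (hz₁_root ▸ hz.2))
      (by have := hz.1; positivity))
    (fun z hz => div_neg_of_neg_of_pos (neg_quadratic_neg_of_gt hM hA (hz₁_root ▸ hz))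
      (by have := hz₁_pos.trans hz; positivity))
  refine ⟨fun ψ hψ => ?_, by rw [hexp], inv_pos.2 (by linarith),
    inv_lt_one_of_one_lt₀ (by linarith)⟩
  rw [hg_odds, hg_odds, hexp]
  exact hmax _ (exp_pos _) (hexp ▸ exp_injective.ne (neg_injective.ne hψ))
end
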